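/- Let N be a positive integer. Define u¹ : ℝ² → ℝ by u¹(τ,x) = Σ_{k=1, k≠N}^{3N−2} b_{1,k} · cos τ · sin(k x) + Σ_{k=1}^{3N−2} b_{3,k} · cos 3τ · sin(k x), where b_{1,k} = −3 S_{N,N,N,k}/(4(k² − N²)) and b_{3,k} = −S_{N,N,N,k}/(4(k² − 9N²)). Then for all (τ,x) ∈ ℝ × (0,π), N² ∂²_τ u¹(τ,x) − ∂²_x u¹(τ,x) = (3N/4) · cos τ · sin(N x) − cos³τ · sin³(N x)/sin²x. -/

import Mathlib

open Real Set Finset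

/-- The function 𝔪(j,k) = (1/2)·sgn(j)·sgn(k)·min(|j|,|k|). -/
noncomputable def frakm (j k : ℤ) : ℝ :=
  (1 / 2 : ℝ) * (j.sign : ℝ) * (k.sign : ℝ) * ((min |j| |k| : ℤ) : ℝ)

/-- The interaction coefficient S_{j,k,l,m}. -/
noncomputable def Scoef (j k l m : ℤ) : ℝ :=
  if Even (j + k + l + m) then
    frakm (j + k - l) m + frakm (j - k + l) m + frakm (-j + k + l) m - frakm (j + k + l) m
  else 0

/-!
Write `S k = S_{N,N,N,k}`. The mode `cos (ωτ) sin (kx)` is multiplied by `k² - N²ω²` under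
`N² ∂²_τ - ∂²_x`, so by the choice of `b_{1,k}` and `b_{3,k}` the left-hand side equals
`-(3/4) cos τ Σ_{k ≠ N} S k sin (kx) - (1/4) cos 3τ Σ_k S k sin (kx)`. Since `S N = N` and
`4 cos³ τ = cos 3τ + 3 cos τ`, everything reduces to `sin² x · Σ_k S k sin (kx) = sin³ (Nx)`.

For that identity, extend `k ↦ S k` to an odd function on `ℤ`. Multiplication by
`sin² x = (2 - e^{2ix} - e^{-2ix})/4` acts on sine coefficients as the second difference
`k ↦ (2 S k - S (k-2) - S (k+2))/4`. On `k ≡ N (mod 2)` the coefficient is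
`(3 clamp_N k - clamp_{3N} k)/2`, piecewise linear with kinks only at `±N` and `±3N`, so the
second difference is supported there and the sum collapses to `(3 sin Nx - sin 3Nx)/4 = sin³ Nx`.
-/

open Function

def secondDiff {R : Type*} [Ring R] (f : ℤ → R) (k : ℤ) : R := 2 * f k - f (k - 2) - f (k + 2)

lemma four_mul_sin_sq_mul_sin (x θ : ℝ) :
    4 * sin x ^ 2 * sin θ =
      2 * sin θ - sin (θ + 2 * x) - sin (θ - 2 * x) := by
  rw [sin_add, sin_sub, cos_two_mul, cos_sq']
  ring

lemma finsum_comp_add_mul_sin (g : ℤ → ℝ) (d : ℤ) (x : ℝ) :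
    ∑ᶠ k : ℤ, g (k + d) * sin (k * x) = ∑ᶠ k : ℤ, g k * sin ((k - d : ℤ) * x) := by
  conv_rhs => rw [← finsum_comp_equiv (Equiv.addRight d)]
  simp

lemma finsum_two_mul_sub_sub {α : Type*} {f₁ f₂ f₃ : α → ℝ} (h₁ : f₁.HasFiniteSupport)
    (h₂ : f₂.HasFiniteSupport) (h₃ : f₃.HasFiniteSupport) :
    ∑ᶠ k, (2 * f₁ k - f₂ k - f₃ k) = 2 * ∑ᶠ k, f₁ k - ∑ᶠ k, f₂ k - ∑ᶠ k, f₃ k := by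
  rw [finsum_sub_distrib (by fun_prop) h₃, finsum_sub_distrib (by fun_prop) h₂, mul_finsum]

lemma sin_sq_mul_finsum {g : ℤ → ℝ} (hg : g.HasFiniteSupport) (x : ℝ) :
    sin x ^ 2 * ∑ᶠ k : ℤ, g k * sin (k * x) =
      (∑ᶠ k : ℤ, secondDiff g k * sin (k * x)) / 4 := by
  rw [eq_div_iff four_ne_zero]
  calc (sin x ^ 2 * ∑ᶠ k : ℤ, g k * sin (k * x)) * 4
      = ∑ᶠ k : ℤ, (2 * (g k * sin (k * x)) - g k * sin ((k - (-2) : ℤ) * x)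
          - g k * sin ((k - 2 : ℤ) * x)) := by
        rw [mul_comm, ← mul_assoc, mul_finsum]
        refine finsum_congr fun k => ?_
        rw [mul_left_comm, four_mul_sin_sq_mul_sin]
        push_cast; ring_nf
    _ = ∑ᶠ k : ℤ, (2 * (g k * sin (k * x)) - g (k + -2) * sin (k * x)
          - g (k + 2) * sin (k * x)) := by
        rw [finsum_two_mul_sub_sub, finsum_two_mul_sub_sub, finsum_comp_add_mul_sin,
          finsum_comp_add_mul_sin]
        all_goals fun_prop (disch := exact add_left_injective _)
    _ = _ := finsum_congr fun k => by rw [secondDiff]; ring_nf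

open Pointwise in
lemma finsum_int_eq_two_nsmul_sum {M : Type*} [AddCommGroup M] {F : ℤ → M}
    (heven : ∀ k, F (-k) = F k) (hzero : F 0 = 0) {n : ℕ} (hsupp : ∀ k : ℤ, n < |k| → F k = 0) :
    ∑ᶠ k, F k = 2 • ∑ m ∈ Finset.Icc 1 n, F m := by
  set s : Finset ℤ := (Finset.Icc 1 n).map Nat.castEmbedding
  have hmem (k : ℤ) : k ∈ s ↔ 1 ≤ k ∧ k ≤ n := by
    simp only [s, Finset.mem_map, Finset.mem_Icc, Nat.castEmbedding_apply]
    exact ⟨by omega, fun h => ⟨k.toNat, by omega, by omega⟩⟩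
  have hdisj : Disjoint s (-s) := by
    simp only [Finset.disjoint_left, Finset.mem_neg', hmem]
    omega
  have hsub : support F ⊆ ↑(s ∪ -s) := by
    intro k hk
    have hk0 : k ≠ 0 := by rintro rfl; exact hk hzero
    have hkn := abs_le.1 (not_lt.1 (mt (hsupp k) hk))
    simp only [coe_union, Set.mem_union, mem_coe, Finset.mem_neg', hmem]
    omega
  rw [finsum_eq_sum_of_support_subset F hsub, sum_union hdisj, sum_neg_index]
  simp [s, heven, two_nsmul]

section Derivatives

variable {ι : Type*} (s : Finset ι) (c ω : ι → ℝ)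

lemma hasDerivAt_sum_mul_sin (y : ℝ) :
    HasDerivAt (fun y => ∑ i ∈ s, c i * sin (ω i * y))
      (∑ i ∈ s, ω i * c i * cos (ω i * y)) y :=
  HasDerivAt.fun_sum fun i _ =>
    ((((hasDerivAt_id' y).const_mul (ω i)).sin).const_mul (c i)).congr_deriv (by ring)

lemma hasDerivAt_sum_mul_cos (y : ℝ) :
    HasDerivAt (fun y => ∑ i ∈ s, c i * cos (ω i * y))
      (-∑ i ∈ s, ω i * c i * sin (ω i * y)) y := by
  rw [← sum_neg_distrib]
  exact HasDerivAt.fun_sum fun i _ =>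
    ((((hasDerivAt_id' y).const_mul (ω i)).cos).const_mul (c i)).congr_deriv (by ring)

lemma deriv_deriv_sum_mul_sin (y : ℝ) :
    deriv (deriv fun y => ∑ i ∈ s, c i * sin (ω i * y)) y =
      -∑ i ∈ s, ω i ^ 2 * c i * sin (ω i * y) := by
  rw [funext fun y => (hasDerivAt_sum_mul_sin s c ω y).deriv,
    (hasDerivAt_sum_mul_cos s (fun i => ω i * c i) ω y).deriv]
  simp only [sq, mul_assoc]

lemma deriv_deriv_sum_mul_cos (y : ℝ) :
    deriv (deriv fun y => ∑ i ∈ s, c i * cos (ω i * y)) y =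
      -∑ i ∈ s, ω i ^ 2 * c i * cos (ω i * y) := by
  rw [funext fun y => (hasDerivAt_sum_mul_cos s c ω y).deriv,
    (hasDerivAt_sum_mul_sin s (fun i => ω i * c i) ω y).fun_neg.deriv]
  simp only [sq, mul_assoc]

lemma wave_sum_cos_mul_sin (α β : ι → ℝ) (a τ x : ℝ) :
    a * deriv (deriv fun t => ∑ i ∈ s, c i * cos (α i * t) * sin (β i * x)) τ
      - deriv (deriv fun y => ∑ i ∈ s, c i * cos (α i * τ) * sin (β i * y)) x
      = ∑ i ∈ s, (β i ^ 2 - a * α i ^ 2) * c i * cos (α i * τ) * sin (β i * x) := by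
  simp only [mul_right_comm (c _) (cos (α _ * _)) (sin (β _ * x))]
  rw [deriv_deriv_sum_mul_cos, deriv_deriv_sum_mul_sin, mul_neg, mul_sum, neg_sub_neg,
    ← sum_sub_distrib]
  exact sum_congr rfl fun i _ => by ring

end Derivatives

def clamp (a k : ℤ) : ℤ := max (-a) (min a k)

lemma frakm_of_pos {a : ℤ} (ha : 0 < a) (k : ℤ) : frakm a k = clamp a k / 2 := by
  rcases lt_trichotomy k 0 with hk | rfl | hk
  · simp only [frakm, clamp, Int.sign_eq_one_of_pos ha, Int.sign_eq_neg_one_of_neg hk,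
      abs_of_pos ha, abs_of_neg hk]
    rw [show max (-a) (min a k) = -min a (-k) by omega]
    push_cast; ring
  · simp [frakm, clamp, ha.le]
  · simp only [frakm, clamp, Int.sign_eq_one_of_pos ha, Int.sign_eq_one_of_pos hk,
      abs_of_pos ha, abs_of_pos hk]
    rw [show max (-a) (min a k) = min a k by omega]
    push_cast; ring

lemma clamp_neg {a : ℤ} (ha : 0 ≤ a) (k : ℤ) : clamp a (-k) = -clamp a k := by
  simp only [clamp, max_def, min_def]
  split_ifs <;> omega

lemma secondDiff_clamp {a : ℤ} (ha : 0 < a) {k : ℤ} (hk : Even (k + a)) :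
    secondDiff (clamp a) k = (if k = a then 2 else 0) - (if k = -a then 2 else 0) := by
  rw [Int.even_iff] at hk
  simp only [secondDiff, clamp, max_def, min_def]
  split_ifs <;> omega

/-- The `k`-th sine coefficient of `2 sin³ (n x) / sin² x`, extended oddly to `k ∈ ℤ`. -/
def sinCubeCoeff (n k : ℤ) : ℤ := if Even (k + n) then 3 * clamp n k - clamp (3 * n) k else 0

lemma Scoef_self_eq {n : ℤ} (hn : 0 < n) (k : ℤ) : Scoef n n n k = sinCubeCoeff n k / 2 := by
  have hpar : Even (n + n + n + k) ↔ Even (k + n) := by simp only [Int.even_iff]; omega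
  rw [Scoef, sinCubeCoeff, if_congr hpar rfl rfl]
  split_ifs
  · rw [show n + n - n = n by ring, show n - n + n = n by ring, show -n + n + n = n by ring,
      show n + n + n = 3 * n by ring, frakm_of_pos hn, frakm_of_pos (by omega)]
    push_cast; ring
  · simp

lemma sinCubeCoeff_self {n : ℤ} (hn : 0 < n) : sinCubeCoeff n n = 2 * n := by
  rw [sinCubeCoeff, if_pos (by simp only [Int.even_iff]; omega)]
  simp only [clamp]; omega

lemma sinCubeCoeff_neg {n : ℤ} (hn : 0 ≤ n) (k : ℤ) : sinCubeCoeff n (-k) = -sinCubeCoeff n k := by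
  have hpar : Even (-k + n) ↔ Even (k + n) := by simp only [Int.even_iff]; omega
  simp only [sinCubeCoeff, if_congr hpar rfl rfl, clamp_neg hn, clamp_neg (by omega : 0 ≤ 3 * n)]
  split_ifs <;> ring

lemma sinCubeCoeff_eq_zero {n k : ℤ} (hk : 3 * n - 1 ≤ |k|) : sinCubeCoeff n k = 0 := by
  rw [le_abs'] at hk
  simp only [sinCubeCoeff, clamp, Int.even_iff]
  split_ifs <;> omega

lemma secondDiff_sinCubeCoeff {n : ℤ} (hn : 0 < n) (k : ℤ) :
    secondDiff (sinCubeCoeff n) k =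
      (if k = n then 6 else 0) - (if k = -n then 6 else 0)
      - (if k = 3 * n then 2 else 0) + (if k = -(3 * n) then 2 else 0) := by
  have hm : Even (k - 2 + n) ↔ Even (k + n) := by simp only [Int.even_iff]; omega
  have hp : Even (k + 2 + n) ↔ Even (k + n) := by simp only [Int.even_iff]; omega
  simp only [secondDiff, sinCubeCoeff, if_congr hm rfl rfl, if_congr hp rfl rfl]
  by_cases hk : Even (k + n)
  · have h₁ := secondDiff_clamp hn hk
    have h₃ := secondDiff_clamp (a := 3 * n) (by omega) (k := k) (by
      rw [Int.even_iff] at hk ⊢; omega)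
    simp only [secondDiff, if_pos hk] at h₁ h₃ ⊢
    split_ifs at h₁ h₃ ⊢ <;> omega
  · rw [Int.even_iff] at hk
    simp only [Int.even_iff, if_neg hk]
    split_ifs <;> omega

lemma finsum_secondDiff_sinCubeCoeff_mul_sin {n : ℤ} (hn : 0 < n) (x : ℝ) :
    ∑ᶠ k : ℤ, ((secondDiff (sinCubeCoeff n) k : ℤ) : ℝ) * sin (k * x) =
      12 * sin (n * x) - 4 * sin (3 * n * x) := by
  simp only [secondDiff_sinCubeCoeff hn]
  rw [finsum_eq_sum_of_support_subset (s := {n, -n, 3 * n, -(3 * n)})]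
  · rw [sum_insert (by simp; omega), sum_insert (by simp; omega), sum_insert (by simp; omega),
      sum_singleton]
    simp (disch := omega) only [if_neg, ite_true]
    push_cast
    simp only [neg_mul, sin_neg]
    ring
  · intro k hk
    contrapose! hk
    simp only [coe_insert, coe_singleton, Set.mem_insert_iff, Set.mem_singleton_iff, not_or] at hk
    simp [hk.1, hk.2.1, hk.2.2.1, hk.2.2.2]

lemma sin_sq_mul_sum_Scoef {N : ℕ} (hN : 0 < N) (x : ℝ) :
    sin x ^ 2 * ∑ k ∈ Finset.Icc 1 (3 * N - 2), Scoef N N N k * sin (k * x) =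
      sin (N * x) ^ 3 := by
  have hn : (0 : ℤ) < N := by exact_mod_cast hN
  set c : ℤ → ℝ := fun k => sinCubeCoeff N k
  have hc_large (k : ℤ) (hk : 3 * (N : ℤ) - 1 ≤ |k|) : c k = 0 := by
    simp [c, sinCubeCoeff_eq_zero hk]
  have hc_fin : c.HasFiniteSupport := by
    refine (Set.finite_Icc (-(3 * N : ℤ)) (3 * N)).subset fun k hk => ?_
    contrapose! hk
    exact notMem_support.2 (hc_large k (by rw [Set.mem_Icc] at hk; rw [le_abs']; omega))
  have hsum : ∑ᶠ k : ℤ, c k * sin (k * x) =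
      4 * ∑ k ∈ Finset.Icc 1 (3 * N - 2), Scoef N N N k * sin (k * x) := by
    rw [finsum_int_eq_two_nsmul_sum (n := 3 * N - 2)]
    · simp only [c, Scoef_self_eq hn, Int.cast_natCast, two_nsmul, mul_sum, ← sum_add_distrib]
      exact sum_congr rfl fun k _ => by ring
    · intro k; simp [c, sinCubeCoeff_neg hn.le]
    · simp
    · intro k hk; rw [hc_large k (by omega), zero_mul]
  have hc_diff : secondDiff c = fun k => ((secondDiff (sinCubeCoeff N) k : ℤ) : ℝ) := by
    ext k; simp [secondDiff, c]
  have key := sin_sq_mul_finsum hc_fin x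
  rw [hsum, hc_diff, finsum_secondDiff_sinCubeCoeff_mul_sin hn, mul_assoc, sin_three_mul] at key
  push_cast at key
  linarith

noncomputable def firstOrderAnsatz (N : ℕ) (s : Finset ℕ) (S : ℕ → ℝ) (t y : ℝ) : ℝ :=
  ∑ k ∈ s.erase N, -3 * S k / (4 * ((k : ℝ) ^ 2 - N ^ 2)) * cos t * sin (k * y)
    + ∑ k ∈ s, -S k / (4 * ((k : ℝ) ^ 2 - 9 * N ^ 2)) * cos (3 * t) * sin (k * y)

lemma natCast_sq_sub_sq_ne_zero {k m : ℕ} (h : k ≠ m) : (k : ℝ) ^ 2 - m ^ 2 ≠ 0 := by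
  rw [sub_ne_zero]; norm_cast
  exact fun h' => h (Nat.pow_left_injective two_ne_zero h')

lemma wave_firstOrderAnsatz (N : ℕ) {s : Finset ℕ} (hs : 3 * N ∉ s) (S : ℕ → ℝ) (τ x : ℝ) :
    (N : ℝ) ^ 2 * deriv (deriv fun t => firstOrderAnsatz N s S t x) τ
      - deriv (deriv fun y => firstOrderAnsatz N s S τ y) x
      = -(3 / 4) * cos τ * ∑ k ∈ s.erase N, S k * sin (k * x)
        - 1 / 4 * cos (3 * τ) * ∑ k ∈ s, S k * sin (k * x) := by
  have hu : firstOrderAnsatz N s S = fun t y => ∑ i ∈ (s.erase N).disjSum s,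
      Sum.elim (fun k => -3 * S k / (4 * ((k : ℝ) ^ 2 - N ^ 2)))
        (fun k => -S k / (4 * ((k : ℝ) ^ 2 - 9 * N ^ 2))) i
      * cos (Sum.elim (fun _ => 1) (fun _ => 3) i * t) * sin (Sum.elim (↑) (↑) i * y) := by
    ext t y
    simp [firstOrderAnsatz, sum_disjSum]
  rw [hu, wave_sum_cos_mul_sin, sum_disjSum, sub_eq_add_neg, mul_sum, mul_sum, ← sum_neg_distrib]
  simp only [Sum.elim_inl, Sum.elim_inr, one_pow, mul_one, one_mul]
  congr 1 <;> refine sum_congr rfl fun k hk => ?_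
  · field_simp [natCast_sq_sub_sq_ne_zero (mem_erase.1 hk).1]
  · have hk' : (k : ℝ) ^ 2 - 9 * N ^ 2 ≠ 0 := by
      convert natCast_sq_sub_sq_ne_zero (ne_of_mem_of_not_mem hk hs) using 1
      push_cast; ring
    rw [show (N : ℝ) ^ 2 * 3 ^ 2 = 9 * N ^ 2 by ring]
    field_simp

theorem first_order_solution (N : ℕ) (hN : 0 < N) (u1 : ℝ → ℝ → ℝ)
    (hu1 : ∀ τ x : ℝ, u1 τ x =
      (∑ k ∈ (Finset.Icc 1 (3 * N - 2)).erase N,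
        (-3 * Scoef N N N k / (4 * ((k : ℝ) ^ 2 - (N : ℝ) ^ 2)))
          * Real.cos τ * Real.sin (k * x))
      + ∑ k ∈ Finset.Icc 1 (3 * N - 2),
        (-(Scoef N N N k) / (4 * ((k : ℝ) ^ 2 - 9 * (N : ℝ) ^ 2)))
          * Real.cos (3 * τ) * Real.sin (k * x)) :
    ∀ τ x : ℝ, x ∈ Set.Ioo 0 π →
      (N : ℝ) ^ 2 * deriv (deriv (fun t => u1 t x)) τ
        - deriv (deriv (fun y => u1 τ y)) x
      = 3 * N / 4 * Real.cos τ * Real.sin (N * x)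
          - (Real.cos τ) ^ 3 * (Real.sin (N * x)) ^ 3 / (Real.sin x) ^ 2 := by
  intro τ x hx
  have hn : (0 : ℤ) < N := by exact_mod_cast hN
  have hu : u1 = firstOrderAnsatz N (Finset.Icc 1 (3 * N - 2)) (fun k => Scoef N N N k) :=
    funext₂ hu1
  have hsin : sin x ≠ 0 := (sin_pos_of_pos_of_lt_pi hx.1 hx.2).ne'
  have hN_mem : N ∈ Finset.Icc 1 (3 * N - 2) := Finset.mem_Icc.2 ⟨hN, by omega⟩
  have hS : Scoef N N N N = N := by simp [Scoef_self_eq hn, sinCubeCoeff_self hn]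
  rw [hu, wave_firstOrderAnsatz N (by rw [Finset.mem_Icc]; omega) _ τ x,
    ← sin_sq_mul_sum_Scoef hN x, ← add_sum_erase _ _ hN_mem, hS, cos_three_mul]
  generalize ∑ k ∈ (Finset.Icc 1 (3 * N - 2)).erase N, Scoef N N N k * sin (k * x) = Q
  field_simp
  ring
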